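/- arXiv:2505.22078 — 6 statements merged into one kernel-verified Lean document; each statement's English description precedes it below -/
import Mathlib

section
/- Let N ≥ 1 and let (d_j), (γ_j), (α_j), (β_j) be real sequences indexed by the integers such that d_j = γ_j + α_j·d_{j+1} + β_j·d_{j-1} for every j with i ≤ j ≤ i+N−1. Define c_{1,1} = γ_i, a_{1,1} = α_i, b_{1,1} = β_i; if N ≥ 2 assume 1 − α_i·β_{i+1} ≠ 0 and define c_{1,2} = (γ_i + α_i·γ_{i+1})/(1 − α_i·β_{i+1}), a_{1,2} = α_i·α_{i+1}/(1 − α_i·β_{i+1}), b_{1,2} = β_i/(1 − α_i·β_{i+1}); and for 2 ≤ n ≤ N−1, assuming a_{1,n-1} ≠ 0 and 1 − β_{i+n}·(a_{1,n}/a_{1,n-1}) ≠ 0, define c_{1,n+1} = [c_{1,n} + a_{1,n}·γ_{i+n} − β_{i+n}·(a_{1,n}/a_{1,n-1})·c_{1,n-1}] / (1 − β_{i+n}·(a_{1,n}/a_{1,n-1})), a_{1,n+1} = a_{1,n}·α_{i+n} / (1 − β_{i+n}·(a_{1,n}/a_{1,n-1})), b_{1,n+1} = [b_{1,n} − β_{i+n}·(a_{1,n}/a_{1,n-1})·b_{1,n-1}]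 / (1 − β_{i+n}·(a_{1,n}/a_{1,n-1})). Then for every n with 1 ≤ n ≤ N one has d_i = c_{1,n} + a_{1,n}·d_{i+n} + b_{1,n}·d_{i-1}. -/
/-!
Substituting the relation at `i + n` into `d_i = c_n + a_n d_{i+n} + b_n d_{i-1}` introduces
`d_{i+n-1}`, which the relation for `n - 1` expresses through `d_i` and `d_{i-1}`, since
`a_n β_{i+n} d_{i+n-1} = β_{i+n} (a_n / a_{n-1}) (d_i - c_{n-1} - b_{n-1} d_{i-1})`.
Solving the resulting equation for `d_i` gives the relation for `n + 1`. The case `n = 2` is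
the same step started from the trivial relation `d_i = 0 + 1 · d_i + 0 · d_{i-1}`.
-/

theorem three_term_relation_substitute {K : Type*} [Field K]
    {d₀ x x' y z c a b c' a' b' γ α β r : K}
    (h : d₀ = c + a * x + b * y) (h' : d₀ = c' + a' * x' + b' * y)
    (hx : x = γ + α * z + β * x') (hr : a = r * a') (hD : 1 - β * r ≠ 0) :
    d₀ = (c + a * γ - β * r * c') / (1 - β * r) + a * α / (1 - β * r) * z
      + (b - β * r * b') / (1 - β * r) * y := by
  have key : (1 - β * r) * d₀ = c + a * γ - β * r * c' + a * α * z + (b - β * r * b') * y := by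
    subst hr
    linear_combination h + r * a' * hx - β * r * h'
  field_simp
  linear_combination key

theorem Nat.le_induction_two_step {P : ℕ → Prop} {N : ℕ} (h1 : 1 ≤ N → P 1)
    (h2 : 2 ≤ N → P 2) (hstep : ∀ m, 2 ≤ m → m + 1 ≤ N → P (m - 1) → P m → P (m + 1)) :
    ∀ n, 1 ≤ n → n ≤ N → P n := by
  intro n hn hnN
  obtain ⟨k, rfl⟩ : ∃ k, n = k + 1 := ⟨n - 1, by omega⟩
  induction k using Nat.twoStepInduction with
  | zero => exact h1 hnN
  | one => exact h2 hnN
  | more k ih₁ ih₂ =>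
    exact hstep (k + 2) (by omega) hnN (ih₁ (by omega) (by omega)) (ih₂ (by omega) (by omega))

theorem forward_extension_relation_general
    (N : ℕ) (i : ℤ) (d γ α β : ℤ → ℝ)
    (hrel : ∀ j : ℤ, i ≤ j → j ≤ i + (N : ℤ) - 1 →
      d j = γ j + α j * d (j + 1) + β j * d (j - 1))
    (c a b : ℕ → ℝ)
    (hc1 : c 1 = γ i) (ha1 : a 1 = α i) (hb1 : b 1 = β i)
    (h2 : 2 ≤ N →
      1 - α i * β (i + 1) ≠ 0 ∧
      c 2 = (γ i + α i * γ (i + 1)) / (1 - α i * β (i + 1)) ∧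
      a 2 = α i * α (i + 1) / (1 - α i * β (i + 1)) ∧
      b 2 = β i / (1 - α i * β (i + 1)))
    (hrec : ∀ n : ℕ, 2 ≤ n → n ≤ N - 1 →
      a (n - 1) ≠ 0 ∧
      1 - β (i + (n : ℤ)) * (a n / a (n - 1)) ≠ 0 ∧
      c (n + 1) = (c n + a n * γ (i + (n : ℤ))
                    - β (i + (n : ℤ)) * (a n / a (n - 1)) * c (n - 1)) /
                  (1 - β (i + (n : ℤ)) * (a n / a (n - 1))) ∧
      a (n + 1) = a n * α (i + (n : ℤ)) /
                  (1 - β (i + (n : ℤ)) * (a n / a (n - 1))) ∧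
      b (n + 1) = (b n - β (i + (n : ℤ)) * (a n / a (n - 1)) * b (n - 1)) /
                  (1 - β (i + (n : ℤ)) * (a n / a (n - 1)))) :
    ∀ n : ℕ, 1 ≤ n → n ≤ N →
      d i = c n + a n * d (i + (n : ℤ)) + b n * d (i - 1) := by
  set P : ℕ → Prop := fun n ↦ d i = c n + a n * d (i + (n : ℤ)) + b n * d (i - 1)
  have rel_at (m : ℕ) (hm : m + 1 ≤ N) :
      d (i + m) = γ (i + m) + α (i + m) * d (i + (m + 1 : ℕ)) + β (i + m) * d (i + m - 1) := by
    simpa [add_assoc] using hrel (i + m) (by omega) (by omega)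
  have P_one (hN : 1 ≤ N) : P 1 := by
    simpa [P, hc1, ha1, hb1, sub_eq_add_neg] using rel_at 0 hN
  have P_two (hN : 2 ≤ N) : P 2 := by
    obtain ⟨hD, hc2, ha2, hb2⟩ := h2 hN
    have trivial_rel : d i = 0 + 1 * d (i + 0) + 0 * d (i - 1) := by simp
    have := three_term_relation_substitute (r := α i) (P_one (by omega)) trivial_rel
      (by simpa using rel_at 1 hN) (by rw [ha1, mul_one]) (by rwa [mul_comm])
    simpa [P, hc1, ha1, hb1, hc2, ha2, hb2, mul_comm (β (i + 1))] using this
  have P_succ (m : ℕ) (hm : 2 ≤ m) (hmN : m + 1 ≤ N) (hPm' : P (m - 1)) (hPm : P m) :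
      P (m + 1) := by
    obtain ⟨ha0, hD, hc, ha, hb⟩ := hrec m hm (by omega)
    simp only [P] at hPm hPm'
    rw [show i + ((m - 1 : ℕ) : ℤ) = i + m - 1 by omega] at hPm'
    simp only [P, hc, ha, hb]
    exact three_term_relation_substitute hPm hPm' (rel_at m hmN)
      (div_mul_cancel₀ _ ha0).symm hD
  exact Nat.le_induction_two_step P_one P_two P_succ

/-- **Forward extension of the three-term relation between derivative values.**
Given sequences `d, γ, α, β : ℤ → ℝ` satisfying the three-term relation
`d_j = γ_j + α_j d_{j+1} + β_j d_{j-1}` for `i ≤ j ≤ i+N−1`, and coefficients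
`c_{1,n}, a_{1,n}, b_{1,n}` defined by the stated recursion (with the stated
nonvanishing assumptions on the denominators), one has
`d_i = c_{1,n} + a_{1,n} d_{i+n} + b_{1,n} d_{i-1}` for every `1 ≤ n ≤ N`. -/
theorem forward_extension_relation
    (N : ℕ) (hN : 1 ≤ N) (i : ℤ) (d γ α β : ℤ → ℝ)
    (hrel : ∀ j : ℤ, i ≤ j → j ≤ i + (N : ℤ) - 1 →
      d j = γ j + α j * d (j + 1) + β j * d (j - 1))
    (c a b : ℕ → ℝ)
    (hc1 : c 1 = γ i) (ha1 : a 1 = α i) (hb1 : b 1 = β i)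
    (h2 : 2 ≤ N →
      1 - α i * β (i + 1) ≠ 0 ∧
      c 2 = (γ i + α i * γ (i + 1)) / (1 - α i * β (i + 1)) ∧
      a 2 = α i * α (i + 1) / (1 - α i * β (i + 1)) ∧
      b 2 = β i / (1 - α i * β (i + 1)))
    (hrec : ∀ n : ℕ, 2 ≤ n → n ≤ N - 1 →
      a (n - 1) ≠ 0 ∧
      1 - β (i + (n : ℤ)) * (a n / a (n - 1)) ≠ 0 ∧
      c (n + 1) = (c n + a n * γ (i + (n : ℤ))
                    - β (i + (n : ℤ)) * (a n / a (n - 1)) * c (n - 1)) /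
                  (1 - β (i + (n : ℤ)) * (a n / a (n - 1))) ∧
      a (n + 1) = a n * α (i + (n : ℤ)) /
                  (1 - β (i + (n : ℤ)) * (a n / a (n - 1))) ∧
      b (n + 1) = (b n - β (i + (n : ℤ)) * (a n / a (n - 1)) * b (n - 1)) /
                  (1 - β (i + (n : ℤ)) * (a n / a (n - 1)))) :
    ∀ n : ℕ, 1 ≤ n → n ≤ N →
      d i = c n + a n * d (i + (n : ℤ)) + b n * d (i - 1) :=
  forward_extension_relation_general N i d γ α β hrel c a b hc1 ha1 hb1 h2 hrec
end

section
/- Let N ≥ 1, M ≥ 1 and let (d_j), (γ_j), (α_j), (β_j) be real sequences indexed by the integers such that d_j = γ_j + α_j·d_{j+1} + β_j·d_{j-1} for every j with i−M+1 ≤ j ≤ i−1. Suppose c_{1,N}, a_{1,N}, b_{1,N} are real numbers with d_i = c_{1,N} + a_{1,N}·d_{i+N} + b_{1,N}·d_{i-1}. If M ≥ 2 assume 1 − b_{1,N}·α_{i-1} ≠ 0 and define c_{2,N} = (c_{1,N} + b_{1,N}·γ_{i-1})/(1 − b_{1,N}·α_{i-1}), a_{2,N} = a_{1,N}/(1 −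 b_{1,N}·α_{i-1}), b_{2,N} = b_{1,N}·β_{i-1}/(1 − b_{1,N}·α_{i-1}); and for 2 ≤ m ≤ M−1, assuming b_{m-1,N} ≠ 0 and 1 − α_{i-m}·(b_{m,N}/b_{m-1,N}) ≠ 0, define c_{m+1,N} = [c_{m,N} + b_{m,N}·γ_{i-m} − α_{i-m}·(b_{m,N}/b_{m-1,N})·c_{m-1,N}] / (1 − α_{i-m}·(b_{m,N}/b_{m-1,N})), a_{m+1,N} = [a_{m,N} − α_{i-m}·(b_{m,N}/b_{m-1,N})·a_{m-1,N}] / (1 − α_{i-m}·(b_{m,N}/b_{m-1,N})), b_{m+1,N} = b_{m,N}·β_{i-m} / (1 − α_{i-m}·(b_{m,N}/b_{m-1,N})). Then for every m with 1 ≤ m ≤ M one has d_i = c_{m,N} + a_{m,N}·d_{i+N} + b_{m,N}·d_{i-m}. -/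
/-!
Write `R m` for the relation `d_i = c_m + a_m d_{i+N} + b_m d_{i-m}`. Substituting the
three-term relation at `j = i - m` into `R m` produces the unwanted term `b_m α_{i-m} d_{i-m+1}`,
which `R (m-1)` expresses through `d_i` and `d_{i+N}`; collecting the `d_i` terms and dividing
gives `R (m+1)`. The first step is the same elimination with `R 0` read as the trivial relation
`d_i = 0 + 0 d_{i+N} + 1 d_i`.
-/

theorem three_term_elimination {K : Type*} [Field K]
    {x D y z w c a b c' a' b' g p q : K} (hb' : b' ≠ 0) (hden : 1 - p * (b / b') ≠ 0)
    (hprev : x = c' + a' * D + b' * z) (hcur : x = c + a * D + b * y)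
    (hy : y = g + p * z + q * w) :
    x = (c + b * g - p * (b / b') * c') / (1 - p * (b / b'))
      + (a - p * (b / b') * a') / (1 - p * (b / b')) * D
      + b * q / (1 - p * (b / b')) * w := by
  have hr : b / b' * b' = b := div_mul_cancel₀ b hb'
  rw [div_mul_eq_mul_div, div_mul_eq_mul_div, ← add_div, ← add_div, eq_div_iff hden]
  linear_combination hcur + b * hy - p * (b / b') * hprev - p * z * hr

theorem backward_extension_relation_general
    (N M : ℕ) (i : ℤ) (d γ α β : ℤ → ℝ)
    (hrel : ∀ j : ℤ, i - (M : ℤ) + 1 ≤ j → j ≤ i - 1 →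
      d j = γ j + α j * d (j + 1) + β j * d (j - 1))
    (c a b : ℕ → ℝ)
    (h1 : d i = c 1 + a 1 * d (i + (N : ℤ)) + b 1 * d (i - 1))
    (h2 : 2 ≤ M →
      1 - b 1 * α (i - 1) ≠ 0 ∧
      c 2 = (c 1 + b 1 * γ (i - 1)) / (1 - b 1 * α (i - 1)) ∧
      a 2 = a 1 / (1 - b 1 * α (i - 1)) ∧
      b 2 = b 1 * β (i - 1) / (1 - b 1 * α (i - 1)))
    (hrec : ∀ m : ℕ, 2 ≤ m → m ≤ M - 1 →
      b (m - 1) ≠ 0 ∧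
      1 - α (i - (m : ℤ)) * (b m / b (m - 1)) ≠ 0 ∧
      c (m + 1) = (c m + b m * γ (i - (m : ℤ))
                    - α (i - (m : ℤ)) * (b m / b (m - 1)) * c (m - 1)) /
                  (1 - α (i - (m : ℤ)) * (b m / b (m - 1))) ∧
      a (m + 1) = (a m - α (i - (m : ℤ)) * (b m / b (m - 1)) * a (m - 1)) /
                  (1 - α (i - (m : ℤ)) * (b m / b (m - 1))) ∧
      b (m + 1) = b m * β (i - (m : ℤ)) /
                  (1 - α (i - (m : ℤ)) * (b m / b (m - 1)))) :
    ∀ m : ℕ, 1 ≤ m → m ≤ M →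
      d i = c m + a m * d (i + (N : ℤ)) + b m * d (i - (m : ℤ)) := by
  have hrel' : ∀ n : ℕ, n + 2 ≤ M →
      d (i - (n + 1 : ℕ)) = γ (i - (n + 1 : ℕ)) + α (i - (n + 1 : ℕ)) * d (i - n)
        + β (i - (n + 1 : ℕ)) * d (i - (n + 2 : ℕ)) := by
    intro n hn
    have h := hrel (i - (n + 1 : ℕ)) (by omega) (by omega)
    rwa [show i - (n + 1 : ℕ) + 1 = i - n by push_cast; ring,
      show i - (n + 1 : ℕ) - 1 = i - (n + 2 : ℕ) by push_cast; ring] at h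
  suffices h : ∀ n : ℕ, n + 1 ≤ M →
      d i = c (n + 1) + a (n + 1) * d (i + N) + b (n + 1) * d (i - (n + 1 : ℕ)) by
    intro m hm hmM
    obtain ⟨n, rfl⟩ := Nat.exists_eq_add_of_le' hm
    exact h n hmM
  intro n
  induction n using Nat.twoStepInduction with
  | zero => simpa using fun _ => h1
  | one =>
    intro hM
    obtain ⟨hden, hc, ha, hb⟩ := h2 hM
    have hR0 : d i = 0 + 0 * d (i + N) + 1 * d (i - (0 : ℕ)) := by simp
    have hR1 : d i = c 1 + a 1 * d (i + N) + b 1 * d (i - (0 + 1 : ℕ)) := by simpa using h1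
    have hR2 := three_term_elimination one_ne_zero (by simpa [mul_comm] using hden) hR0 hR1
      (hrel' 0 hM)
    rw [hc, ha, hb]
    convert hR2 using 3 <;> simp [mul_comm]
  | more n hR hR' =>
    intro hM
    obtain ⟨hb', hden, hc, ha, hb⟩ := hrec (n + 2) (by omega) (by omega)
    rw [hc, ha, hb]
    exact three_term_elimination hb' hden (hR (by omega)) (hR' (by omega))
      (hrel' (n + 1) (by omega))

/-- **Backward extension of the three-term relation between derivative values.**
Given sequences `d, γ, α, β : ℤ → ℝ` satisfying the three-term relation
`d_j = γ_j + α_j d_{j+1} + β_j d_{j-1}` for `i−M+1 ≤ j ≤ i−1`, and an already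
established relation `d_i = c_{1,N} + a_{1,N} d_{i+N} + b_{1,N} d_{i-1}`, the
coefficients `c_{m,N}, a_{m,N}, b_{m,N}` defined by the stated backward
recursion (with the stated nonvanishing assumptions on the denominators)
satisfy `d_i = c_{m,N} + a_{m,N} d_{i+N} + b_{m,N} d_{i-m}` for every
`1 ≤ m ≤ M`. -/
theorem backward_extension_relation
    (N M : ℕ) (hN : 1 ≤ N) (hM : 1 ≤ M) (i : ℤ) (d γ α β : ℤ → ℝ)
    (hrel : ∀ j : ℤ, i - (M : ℤ) + 1 ≤ j → j ≤ i - 1 →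
      d j = γ j + α j * d (j + 1) + β j * d (j - 1))
    (c a b : ℕ → ℝ)
    (h1 : d i = c 1 + a 1 * d (i + (N : ℤ)) + b 1 * d (i - 1))
    (h2 : 2 ≤ M →
      1 - b 1 * α (i - 1) ≠ 0 ∧
      c 2 = (c 1 + b 1 * γ (i - 1)) / (1 - b 1 * α (i - 1)) ∧
      a 2 = a 1 / (1 - b 1 * α (i - 1)) ∧
      b 2 = b 1 * β (i - 1) / (1 - b 1 * α (i - 1)))
    (hrec : ∀ m : ℕ, 2 ≤ m → m ≤ M - 1 →
      b (m - 1) ≠ 0 ∧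
      1 - α (i - (m : ℤ)) * (b m / b (m - 1)) ≠ 0 ∧
      c (m + 1) = (c m + b m * γ (i - (m : ℤ))
                    - α (i - (m : ℤ)) * (b m / b (m - 1)) * c (m - 1)) /
                  (1 - α (i - (m : ℤ)) * (b m / b (m - 1))) ∧
      a (m + 1) = (a m - α (i - (m : ℤ)) * (b m / b (m - 1)) * a (m - 1)) /
                  (1 - α (i - (m : ℤ)) * (b m / b (m - 1))) ∧
      b (m + 1) = b m * β (i - (m : ℤ)) /
                  (1 - α (i - (m : ℤ)) * (b m / b (m - 1)))) :
    ∀ m : ℕ, 1 ≤ m → m ≤ M →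
      d i = c m + a m * d (i + (N : ℤ)) + b m * d (i - (m : ℤ)) :=
  backward_extension_relation_general N M i d γ α β hrel c a b h1 h2 hrec
end

section
/- For k ∈ ℤ define u_k = (2+√3)^k − (2−√3)^k. Let K ≥ 1 and let w_1, …, w_K be real numbers such that for every k with 1 ≤ k < K one has 4 + w_k ≠ 0 and w_{k+1} = −1/(4 + w_k). Then for every k with 1 ≤ k ≤ K one has u_k + u_{k-1}·w_1 ≠ 0 and w_k = −(u_{k-1} + u_{k-2}·w_1)/(u_k + u_{k-1}·w_1). -/
/-- The sequence `u_k = (2+√3)^k − (2−√3)^k`, indexed by the integers. -/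
noncomputable def uSeq (k : ℤ) : ℝ :=
  (2 + Real.sqrt 3) ^ k - (2 - Real.sqrt 3) ^ k

lemma sqrt3_sq : Real.sqrt 3 ^ 2 = 3 := Real.sq_sqrt (by norm_num)

lemma sqrt3_lt : Real.sqrt 3 < 2 := by
  nlinarith [Real.sq_sqrt (show (3:ℝ) ≥ 0 by norm_num), Real.sqrt_nonneg 3]

lemma sqrt3_pos : 0 < Real.sqrt 3 := Real.sqrt_pos.mpr (by norm_num)

lemma a_ne : (2 + Real.sqrt 3 : ℝ) ≠ 0 := by nlinarith [sqrt3_pos]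

lemma b_ne : (2 - Real.sqrt 3 : ℝ) ≠ 0 := by nlinarith [sqrt3_lt]

lemma uSeq_rec (k : ℤ) : uSeq (k + 1) = 4 * uSeq k - uSeq (k - 1) := by
  have ha := a_ne
  have hb := b_ne
  have hmul : (2 + Real.sqrt 3) * (2 - Real.sqrt 3) = (1:ℝ) := by nlinarith [sqrt3_sq]
  have hia : (2 + Real.sqrt 3 : ℝ)⁻¹ = 2 - Real.sqrt 3 :=
    inv_eq_of_mul_eq_one_right hmul
  have hib : (2 - Real.sqrt 3 : ℝ)⁻¹ = 2 + Real.sqrt 3 :=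
    inv_eq_of_mul_eq_one_right (by linarith [hmul])
  simp only [uSeq, zpow_add_one₀ ha, zpow_add_one₀ hb, zpow_sub_one₀ ha, zpow_sub_one₀ hb,
    hia, hib]
  ring

lemma uSeq_zero : uSeq 0 = 0 := by simp [uSeq]

lemma uSeq_one : uSeq 1 = 2 * Real.sqrt 3 := by simp [uSeq]; ring

lemma uSeq_negone : uSeq (-1) = -(2 * Real.sqrt 3) := by
  have h := uSeq_rec 0
  rw [zero_add, uSeq_zero, uSeq_one, show (0:ℤ) - 1 = -1 by ring] at h
  linarith

/-- **Closed form for the continued-fraction recursion `w_{k+1} = −1/(4+w_k)`.**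
If `w_1, …, w_K` satisfy `4 + w_k ≠ 0` and `w_{k+1} = −1/(4 + w_k)` for
`1 ≤ k < K`, then for every `1 ≤ k ≤ K` one has `u_k + u_{k-1} w_1 ≠ 0` and
`w_k = −(u_{k-1} + u_{k-2} w_1)/(u_k + u_{k-1} w_1)`. -/
theorem continued_fraction_recursion_closed_form
    (K : ℕ) (hK : 1 ≤ K) (w : ℕ → ℝ)
    (hw : ∀ k : ℕ, 1 ≤ k → k < K →
      4 + w k ≠ 0 ∧ w (k + 1) = -1 / (4 + w k)) :
    ∀ k : ℕ, 1 ≤ k → k ≤ K →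
      uSeq (k : ℤ) + uSeq ((k : ℤ) - 1) * w 1 ≠ 0 ∧
      w k = -(uSeq ((k : ℤ) - 1) + uSeq ((k : ℤ) - 2) * w 1) /
            (uSeq (k : ℤ) + uSeq ((k : ℤ) - 1) * w 1) := by
  intro k
  induction k with
  | zero => intro h; omega
  | succ n ih =>
    intro _ hnK
    rcases Nat.eq_zero_or_pos n with hn | hn
    · subst hn
      have hs := sqrt3_pos
      have h2 : 2 * Real.sqrt 3 ≠ 0 := by positivity
      rw [show ((0 + 1 : ℕ) : ℤ) = 1 by norm_num, show (1:ℤ) - 1 = 0 by ring,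
          show (1:ℤ) - 2 = -1 by ring, uSeq_zero, uSeq_one, uSeq_negone,
          zero_mul, add_zero, zero_add]
      refine ⟨h2, ?_⟩
      rw [eq_div_iff h2]; ring
    · -- inductive step: n ≥ 1, n + 1 ≤ K
      have hnK' : n < K := by omega
      obtain ⟨hA, hw2⟩ := ih hn (by omega)
      obtain ⟨hne, hstep⟩ := hw n hn hnK'
      -- abbreviations
      set A := uSeq (n : ℤ) + uSeq ((n : ℤ) - 1) * w 1 with hAdef
      set B := uSeq ((n : ℤ) - 1) + uSeq ((n : ℤ) - 2) * w 1 with hBdef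
      have hrec1 : uSeq ((n : ℤ) + 1) = 4 * uSeq (n : ℤ) - uSeq ((n : ℤ) - 1) :=
        uSeq_rec _
      have hrec2 : uSeq (n : ℤ) = 4 * uSeq ((n : ℤ) - 1) - uSeq ((n : ℤ) - 2) := by
        have h := uSeq_rec ((n : ℤ) - 1)
        rw [sub_add_cancel, show (n:ℤ) - 1 - 1 = (n:ℤ) - 2 by ring] at h
        exact h
      have hA1 : uSeq ((n : ℤ) + 1) + uSeq (n : ℤ) * w 1 = 4 * A - B := by
        rw [hrec1]
        nth_rewrite 2 [hrec2]
        simp only [hAdef, hBdef]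
        ring
      have hfour : 4 + w n = (4 * A - B) / A := by
        rw [hw2]; field_simp; ring
      have h4AB : 4 * A - B ≠ 0 := by
        intro h0
        rw [h0, zero_div] at hfour
        exact hne hfour
      push_cast
      rw [show ((n : ℤ) + 1) - 1 = (n : ℤ) by ring,
          show ((n : ℤ) + 1) - 2 = (n : ℤ) - 1 by ring]
      constructor
      · rw [hA1]; exact h4AB
      · rw [hstep, hfour, hA1, ← hAdef]
        field_simp
end

section
/- For k ∈ ℤ define u_k = (2+√3)^k − (2−√3)^k. Let a, b be nonzero real numbers, let n ≥ 1 and m ≥ 1, and assume u_j + u_{j-1}·a ≠ 0 for all 1 ≤ j ≤ n and u_m·u_n + u_m·u_{n-1}·a + u_n·u_{m-1}·b ≠ 0, as well as u_j·u_n + u_j·u_{n-1}·a + u_n·u_{j-1}·b ≠ 0 for all 1 ≤ j ≤ m. Let a_{1,n} = (−1)^{n-1}·u_1·a/(u_n + u_{n-1}·a) and b_{1,n} = u_n·b/(u_n + u_{n-1}·a) be the forward extension coefficients, and let a_{m,n}, b_{m,n} be obtained from the base values (a_{1,n}, b_{1,n}) by the backward recursion a_{2,n} = 4·a_{1,n}/(4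 + b_{1,n}), b_{2,n} = −b_{1,n}/(4 + b_{1,n}), and for j ≥ 2: a_{j+1,n} = [4·a_{j,n} + (b_{j,n}/b_{j-1,n})·a_{j-1,n}]/(4 + b_{j,n}/b_{j-1,n}), b_{j+1,n} = −b_{j,n}/(4 + b_{j,n}/b_{j-1,n}). Then a_{m,n} = (−1)^{n-1}·u_1·a·u_m/(u_m·u_n + u_m·u_{n-1}·a + u_n·u_{m-1}·b) and b_{m,n} = (−1)^{m-1}·u_1·b·u_n/(u_m·u_n + u_m·u_{n-1}·a + u_n·u_{m-1}·b). -/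
lemma uSeq_one_ne : uSeq 1 ≠ 0 := by
  rw [uSeq_one]; positivity

lemma zpow_rec {x : ℝ} (hx : x ≠ 0) (hsq : x ^ (2:ℕ) = 4 * x - 1) (k : ℤ) :
    x ^ (k + 1) = 4 * x ^ k - x ^ (k - 1) := by
  have h1 : x ^ (k + 1) = x ^ (k - 1) * x ^ (2:ℕ) := by
    rw [← zpow_natCast x 2, ← zpow_add₀ hx]
    congr 1; ring
  have h2 : x ^ k = x ^ (k - 1) * x := by
    rw [← zpow_add_one₀ hx]; ring_nf
  rw [h1, hsq, h2]; ring

lemma uSeq_pos (j : ℕ) (hj : 1 ≤ j) : 0 < uSeq (j : ℤ) := by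
  have h1 : (0:ℝ) < 2 - Real.sqrt 3 := by have := sqrt3_lt; linarith
  have h2 : (2 - Real.sqrt 3) < 2 + Real.sqrt 3 := by
    have : (0:ℝ) < Real.sqrt 3 := Real.sqrt_pos.mpr (by norm_num)
    linarith
  have : (2 - Real.sqrt 3) ^ j < (2 + Real.sqrt 3) ^ j :=
    pow_lt_pow_left₀ h2 (le_of_lt h1) (by omega)
  unfold uSeq
  rw [zpow_natCast, zpow_natCast]
  linarith

lemma uSeq_cast_rec (k : ℕ) :
    uSeq ((k:ℤ) + 2) = 4 * uSeq ((k:ℤ) + 1) - uSeq (k:ℤ) := by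
  have h := uSeq_rec ((k:ℤ) + 1)
  rw [show (k:ℤ) + 1 + 1 = (k:ℤ) + 2 by ring, show (k:ℤ) + 1 - 1 = (k:ℤ) by ring] at h
  exact h

/-- The denominator sequence. -/
noncomputable def Ddef (a b : ℝ) (n : ℕ) (j : ℕ) : ℝ :=
  uSeq (j : ℤ) * uSeq (n : ℤ) + uSeq (j : ℤ) * uSeq ((n : ℤ) - 1) * a
    + uSeq (n : ℤ) * uSeq ((j : ℤ) - 1) * b

lemma Ddef_rec (a b : ℝ) (n : ℕ) (k : ℕ) :
    Ddef a b n (k + 2) = 4 * Ddef a b n (k + 1) - Ddef a b n k := by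
  unfold Ddef
  push_cast
  have e1 := uSeq_cast_rec k
  have e2 : uSeq ((k:ℤ) + 1) = 4 * uSeq (k:ℤ) - uSeq ((k:ℤ) - 1) := uSeq_rec k
  rw [show (k:ℤ) + 2 - 1 = (k:ℤ) + 1 by ring, show (k:ℤ) + 1 - 1 = (k:ℤ) by ring]
  linear_combination (uSeq (n:ℤ) + uSeq ((n:ℤ) - 1) * a) * e1 + (uSeq (n:ℤ) * b) * e2

lemma Ddef_one (a b : ℝ) (n : ℕ) :
    Ddef a b n 1 = uSeq 1 * (uSeq (n:ℤ) + uSeq ((n:ℤ) - 1) * a) := by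
  unfold Ddef
  norm_num [uSeq_zero]
  ring

lemma uSeq_two : uSeq 2 = 4 * uSeq 1 := by
  have h := uSeq_rec 1
  norm_num [uSeq_zero] at h
  exact h

lemma Ddef_two (a b : ℝ) (n : ℕ) :
    Ddef a b n 2 = uSeq 1 * (4 * (uSeq (n:ℤ) + uSeq ((n:ℤ) - 1) * a) + uSeq (n:ℤ) * b) := by
  unfold Ddef
  norm_num [uSeq_two]
  ring

lemma case2_alg (NA u1 un w a b : ℝ) (hd1 : un + w * a ≠ 0) (hu1 : u1 ≠ 0)
    (hq : 4 * (un + w * a) + un * b ≠ 0) :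
    4 * (NA / (un + w * a)) / (4 + un * b / (un + w * a))
      = NA * (4 * u1) / (u1 * (4 * (un + w * a) + un * b)) ∧
    -(un * b / (un + w * a)) / (4 + un * b / (un + w * a))
      = -1 * (u1 * b * un) / (u1 * (4 * (un + w * a) + un * b)) := by
  have h4 : 4 + un * b / (un + w * a) = (4 * (un + w * a) + un * b) / (un + w * a) := by
    field_simp
  rw [h4]
  constructor
  · rw [div_div_eq_mul_div, div_eq_div_iff hq (mul_ne_zero hu1 hq)]
    field_simp
  · rw [div_div_eq_mul_div, div_eq_div_iff hq (mul_ne_zero hu1 hq)]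
    field_simp

lemma step_alg (s NA NB up uc Dp Dc : ℝ) (hs : s ≠ 0) (hNB : NB ≠ 0)
    (hDp : Dp ≠ 0) (hDc : Dc ≠ 0) (hDn : 4 * Dc - Dp ≠ 0) :
    (4 * (NA * uc / Dc) + ((-s * NB / Dc) / (s * NB / Dp)) * (NA * up / Dp)) /
      (4 + (-s * NB / Dc) / (s * NB / Dp)) = NA * (4 * uc - up) / (4 * Dc - Dp) ∧
    -(-s * NB / Dc) / (4 + (-s * NB / Dc) / (s * NB / Dp)) = s * NB / (4 * Dc - Dp) := by
  have h1 : (-s * NB / Dc) / (s * NB / Dp) = -Dp / Dc := by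
    field_simp
  rw [h1]
  have h2 : 4 + -Dp / Dc = (4 * Dc - Dp) / Dc := by field_simp; ring
  rw [h2]
  constructor
  · rw [div_div_eq_mul_div, div_eq_div_iff hDn hDn]
    field_simp
    ring
  · field_simp

/-- **Closed form of the two-sided extension coefficients in the
uniform-per-patch case.** Starting from the closed-form forward coefficients
`a_{1,n}, b_{1,n}` and applying the backward recursion, one obtains
`a_{m,n} = (−1)^{n-1} u_1 a u_m / (u_m u_n + u_m u_{n-1} a + u_n u_{m-1} b)`
and
`b_{m,n} = (−1)^{m-1} u_1 b u_n / (u_m u_n + u_m u_{n-1} a + u_n u_{m-1} b)`. -/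
theorem two_sided_coefficients_closed_form
    (a b : ℝ) (ha : a ≠ 0) (hb : b ≠ 0) (n m : ℕ) (hn : 1 ≤ n) (hm : 1 ≤ m)
    (hden1 : ∀ j : ℕ, 1 ≤ j → j ≤ n → uSeq (j : ℤ) + uSeq ((j : ℤ) - 1) * a ≠ 0)
    (hden2 : ∀ j : ℕ, 1 ≤ j → j ≤ m →
      uSeq (j : ℤ) * uSeq (n : ℤ) + uSeq (j : ℤ) * uSeq ((n : ℤ) - 1) * a
        + uSeq (n : ℤ) * uSeq ((j : ℤ) - 1) * b ≠ 0)
    (A B : ℕ → ℝ)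
    (hA1 : A 1 = (-1 : ℝ) ^ (n - 1) * uSeq 1 * a / (uSeq (n : ℤ) + uSeq ((n : ℤ) - 1) * a))
    (hB1 : B 1 = uSeq (n : ℤ) * b / (uSeq (n : ℤ) + uSeq ((n : ℤ) - 1) * a))
    (hA2 : 2 ≤ m → A 2 = 4 * A 1 / (4 + B 1))
    (hB2 : 2 ≤ m → B 2 = -B 1 / (4 + B 1))
    (hArec : ∀ j : ℕ, 2 ≤ j → j ≤ m - 1 →
      A (j + 1) = (4 * A j + (B j / B (j - 1)) * A (j - 1)) / (4 + B j / B (j - 1)))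
    (hBrec : ∀ j : ℕ, 2 ≤ j → j ≤ m - 1 →
      B (j + 1) = -B j / (4 + B j / B (j - 1))) :
    A m = (-1 : ℝ) ^ (n - 1) * uSeq 1 * a * uSeq (m : ℤ) /
          (uSeq (m : ℤ) * uSeq (n : ℤ) + uSeq (m : ℤ) * uSeq ((n : ℤ) - 1) * a
            + uSeq (n : ℤ) * uSeq ((m : ℤ) - 1) * b) ∧
    B m = (-1 : ℝ) ^ (m - 1) * uSeq 1 * b * uSeq (n : ℤ) /
          (uSeq (m : ℤ) * uSeq (n : ℤ) + uSeq (m : ℤ) * uSeq ((n : ℤ) - 1) * a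
            + uSeq (n : ℤ) * uSeq ((m : ℤ) - 1) * b) := by
  have hD : ∀ j : ℕ, 1 ≤ j → j ≤ m → Ddef a b n j ≠ 0 := fun j h1 h2 => hden2 j h1 h2
  have hd1 : uSeq (n:ℤ) + uSeq ((n:ℤ) - 1) * a ≠ 0 := hden1 n hn le_rfl
  have hun : uSeq (n:ℤ) ≠ 0 := ne_of_gt (uSeq_pos n hn)
  set NA : ℝ := (-1 : ℝ) ^ (n - 1) * uSeq 1 * a with hNA
  set NB : ℝ := uSeq 1 * b * uSeq (n:ℤ) with hNBdef
  have hNB : NB ≠ 0 := by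
    exact mul_ne_zero (mul_ne_zero uSeq_one_ne hb) hun
  have key : ∀ j : ℕ, 1 ≤ j → j ≤ m →
      A j = NA * uSeq (j:ℤ) / Ddef a b n j ∧
      B j = (-1 : ℝ) ^ (j - 1) * NB / Ddef a b n j := by
    intro j
    induction j using Nat.strong_induction_on with
    | _ j ih =>
      match j with
      | 0 => intro h; omega
      | 1 =>
        intro _ _
        constructor
        · rw [hA1, Ddef_one]
          rw [div_eq_div_iff hd1 (by rw [← Ddef_one]; exact hD 1 le_rfl hm)]
          push_cast
          ring
        · rw [hB1, Ddef_one]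
          rw [div_eq_div_iff hd1 (by rw [← Ddef_one]; exact hD 1 le_rfl hm)]
          norm_num
          ring
      | 2 =>
        intro _ h2m
        have hD2 : Ddef a b n 2 ≠ 0 := hD 2 (by omega) h2m
        have hq : 4 * (uSeq (n:ℤ) + uSeq ((n:ℤ) - 1) * a) + uSeq (n:ℤ) * b ≠ 0 := by
          intro h
          apply hD2
          rw [Ddef_two, h, mul_zero]
        have h2c : uSeq ((2:ℕ):ℤ) = 4 * uSeq 1 := by norm_num [uSeq_two]
        constructor
        · rw [hA2 h2m, hA1, hB1, h2c, Ddef_two]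
          exact (case2_alg NA (uSeq 1) (uSeq (n:ℤ)) (uSeq ((n:ℤ) - 1)) a b hd1
            uSeq_one_ne hq).1
        · rw [hB2 h2m, hB1, Ddef_two]
          simp only [show (2:ℕ) - 1 = 1 by rfl, pow_one, hNBdef]
          exact (case2_alg NA (uSeq 1) (uSeq (n:ℤ)) (uSeq ((n:ℤ) - 1)) a b hd1
            uSeq_one_ne hq).2
      | (k+3) =>
        intro _ h3m
        have h2m1 : (k + 2 : ℕ) ≤ m - 1 := by omega
        have ihp := ih (k+1) (by omega) (by omega) (by omega)
        have ihc := ih (k+2) (by omega) (by omega) (by omega)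
        have hDp : Ddef a b n (k+1) ≠ 0 := hD (k+1) (by omega) (by omega)
        have hDc : Ddef a b n (k+2) ≠ 0 := hD (k+2) (by omega) (by omega)
        have hDn0 : Ddef a b n (k+3) ≠ 0 := hD (k+3) (by omega) h3m
        have hDrec : Ddef a b n (k+3) = 4 * Ddef a b n (k+2) - Ddef a b n (k+1) :=
          Ddef_rec a b n (k+1)
        have hDn : 4 * Ddef a b n (k+2) - Ddef a b n (k+1) ≠ 0 := hDrec ▸ hDn0
        have hs : ((-1:ℝ)^k) ≠ 0 := pow_ne_zero _ (by norm_num)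
        have hBp : B (k+1) = (-1:ℝ)^k * NB / Ddef a b n (k+1) := by
          simpa using ihp.2
        have hBc : B (k+2) = -(-1:ℝ)^k * NB / Ddef a b n (k+2) := by
          rw [ihc.2]
          have : ((-1:ℝ))^(k+2-1) = -(-1:ℝ)^k := by
            rw [show k+2-1 = k+1 from rfl, pow_succ]; ring
          rw [this]
        have hstep := step_alg ((-1:ℝ)^k) NA NB (uSeq ((k+1:ℕ):ℤ)) (uSeq ((k+2:ℕ):ℤ))
            (Ddef a b n (k+1)) (Ddef a b n (k+2)) hs hNB hDp hDc hDn
        have hu : uSeq ((k+3:ℕ):ℤ) = 4 * uSeq ((k+2:ℕ):ℤ) - uSeq ((k+1:ℕ):ℤ) := by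
          rw [show ((k+3:ℕ):ℤ) = ((k+1:ℕ):ℤ) + 2 by push_cast; ring,
              show ((k+2:ℕ):ℤ) = ((k+1:ℕ):ℤ) + 1 by push_cast; ring]
          exact uSeq_cast_rec (k+1)
        constructor
        · rw [show (k+3 : ℕ) = (k+2)+1 from rfl, hArec (k+2) (by omega) h2m1,
              show (k+2)-1 = k+1 from rfl, ihc.1, ihp.1, hBc, hBp,
              show (k+2)+1 = k+3 from rfl, hu, hDrec]
          exact hstep.1
        · rw [show (k+3 : ℕ) = (k+2)+1 from rfl, hBrec (k+2) (by omega) h2m1,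
              show (k+2)-1 = k+1 from rfl, hBc, hBp,
              show (k+2)+1 = k+3 from rfl, hDrec,
              show (k+3)-1 = k+2 from rfl,
              show ((-1:ℝ))^(k+2) = (-1:ℝ)^k by rw [pow_succ, pow_succ]; ring]
          exact hstep.2
  have h1 := key m hm le_rfl
  refine ⟨h1.1, ?_⟩
  rw [h1.2]
  unfold Ddef NB
  ring_nf
end

section
/- For k ∈ ℤ define u_k = (2+√3)^k − (2−√3)^k. Let Δ^L > 0, Δ^R > 0 and set a = −(1/2)·Δ^L/(Δ^R+Δ^L) and b = −(1/2)·Δ^R/(Δ^R+Δ^L). For n ≥ 1 define a_{n,n} = (−1)^{n-1}·u_1·a·u_n/D_n and b_{n,n} = (−1)^{n-1}·u_1·b·u_n/D_n, where D_n = u_n·u_n + u_n·u_{n-1}·a + u_n·u_{n-1}·b. Then D_n ≠ 0 for all n ≥ 1 and, as n → ∞, a_{n,n}·(−(2+√3))^n → −4·a and b_{n,n}·(−(2+√3))^n → −4·b; equivalently, a_{n,n} is asymptotically equivalent to (−(2−√3))^n·(−4·a_{1,1}) and b_{n,n} to (−(2−√3))^n·(−4·b_{1,1}) with a_{1,1}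 = a, b_{1,1} = b. -/
/-! Since `a + b = -1/2`, `D_n = u_n (u_n - u_{n-1}/2)`, so the sign and one factor `u_n` cancel and
`a_{n,n} (-(2+√3))^n = -u_1 a (2+√3)^n / (u_n - u_{n-1}/2)`. As `2 - √3 = (2+√3)⁻¹ < 1`, `u_n` grows
like `(2+√3)^n`, the denominator divided by `(2+√3)^n` tends to `1 - (2-√3)/2 = √3/2`, and
`u_1 = 2√3` gives the limit `-4a`. -/

open Filter Topology Real

lemma tendsto_sub_pow_div_pow {p q : ℝ} (hq : 0 ≤ q) (hqp : q < p) :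
    Tendsto (fun n : ℕ => (p ^ n - q ^ n) / p ^ n) atTop (𝓝 1) := by
  have hp : 0 < p := hq.trans_lt hqp
  have h := (tendsto_pow_atTop_nhds_zero_of_lt_one (div_nonneg hq hp.le)
    ((div_lt_one hp).2 hqp)).const_sub 1
  rw [sub_zero] at h
  refine h.congr fun n => ?_
  rw [div_pow, sub_div, div_self (pow_ne_zero n hp.ne')]

lemma two_sub_sqrt_three_pos : 0 < 2 - √3 := by
  have : √3 < 2 := by
    rw [show (2 : ℝ) = √(2 ^ 2) by simp]
    exact Real.sqrt_lt_sqrt (by norm_num) (by norm_num)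
  linarith

lemma two_sub_sqrt_three_lt_two_add_sqrt_three : 2 - √3 < 2 + √3 := by
  have : 0 < √3 := by positivity
  linarith

lemma inv_two_add_sqrt_three : (2 + √3)⁻¹ = 2 - √3 := by
  rw [inv_eq_of_mul_eq_one_right]
  nlinarith [Real.sq_sqrt (show (0 : ℝ) ≤ 3 by norm_num)]

namespace uSeq

lemma natCast (n : ℕ) : uSeq n = (2 + √3) ^ n - (2 - √3) ^ n := by
  simp [uSeq, zpow_natCast]

lemma one : uSeq 1 = 2 * √3 := by
  simp only [uSeq, zpow_one]; ring

lemma natCast_pos {n : ℕ} (hn : n ≠ 0) : 0 < uSeq n := by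
  rw [natCast, sub_pos]
  exact pow_lt_pow_left₀ two_sub_sqrt_three_lt_two_add_sqrt_three two_sub_sqrt_three_pos.le hn

lemma natCast_le_succ (n : ℕ) : uSeq n ≤ uSeq (n + 1 : ℕ) := by
  have h3 : 1 ≤ √3 := Real.one_le_sqrt.2 (by norm_num)
  have hp : 1 ≤ 2 + √3 := by linarith
  have hq : 2 - √3 ≤ 1 := by linarith
  simp only [natCast]
  have h1 := pow_le_pow_right₀ hp (n.le_add_right 1)
  have h2 := pow_le_pow_of_le_one two_sub_sqrt_three_pos.le hq (n.le_add_right 1)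
  linarith

lemma natCast_succ_sub_half_pos (n : ℕ) : 0 < uSeq (n + 1 : ℕ) - uSeq n / 2 := by
  linarith [natCast_pos n.succ_ne_zero, natCast_le_succ n]

lemma tendsto_div_pow : Tendsto (fun n : ℕ => uSeq n / (2 + √3) ^ n) atTop (𝓝 1) := by
  simpa only [natCast] using
    tendsto_sub_pow_div_pow two_sub_sqrt_three_pos.le two_sub_sqrt_three_lt_two_add_sqrt_three

lemma tendsto_sub_half_div_pow :
    Tendsto (fun n : ℕ => (uSeq (n + 1 : ℕ) - uSeq n / 2) / (2 + √3) ^ (n + 1)) atTop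
      (𝓝 (1 - (2 - √3) / 2)) := by
  have h := ((tendsto_add_atTop_iff_nat 1).2 tendsto_div_pow).sub
    ((tendsto_div_pow.mul_const (2 + √3)⁻¹).div_const 2)
  rw [← inv_two_add_sqrt_three, ← one_mul (2 + √3)⁻¹]
  refine h.congr fun n => ?_
  have : (2 + √3) ≠ 0 := by positivity
  field_simp
  ring

end uSeq

lemma tendsto_coeff_mul_neg_pow {D X : ℕ → ℝ} {x : ℝ}
    (hD : ∀ m : ℕ, D (m + 1) = uSeq (m + 1 : ℕ) * (uSeq (m + 1 : ℕ) - uSeq m / 2))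
    (hX : ∀ n : ℕ, 1 ≤ n → X n = (-1 : ℝ) ^ (n - 1) * uSeq 1 * x * uSeq (n : ℤ) / D n) :
    Tendsto (fun n : ℕ => X n * (-(2 + √3)) ^ n) atTop (𝓝 (-4 * x)) := by
  have h3 : 0 < √3 := by positivity
  have hlim := (tendsto_const_nhds (x := -(uSeq 1 * x))).div uSeq.tendsto_sub_half_div_pow
    (by linarith)
  rw [uSeq.one, show -(2 * √3 * x) / (1 - (2 - √3) / 2) = -4 * x by field_simp; ring] at hlim
  refine (tendsto_add_atTop_iff_nat 1).1 (hlim.congr fun m => ?_)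
  have hu := (uSeq.natCast_pos m.succ_ne_zero).ne'
  have hE := (uSeq.natCast_succ_sub_half_pos m).ne'
  have hp : (2 + √3) ^ (m + 1) ≠ 0 := by positivity
  have hsign : (-1 : ℝ) ^ m * (-1) ^ (m + 1) = -1 := by
    rw [pow_succ, ← mul_assoc, ← pow_add, Even.neg_one_pow ⟨m, rfl⟩, one_mul]
  rw [Pi.div_apply, hX (m + 1) m.succ_pos, hD, uSeq.one, Nat.add_sub_cancel, neg_pow (2 + √3)]
  field_simp
  rw [mul_assoc x, hsign]
  ring

/-- **Asymptotic behavior of the two-sided extension coefficients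
`a_{n,n}`, `b_{n,n}` when the same (large) number of cells is used on both
sides of the interface.** `D_n ≠ 0` for `n ≥ 1`, and
`a_{n,n}·(−(2+√3))^n → −4a`, `b_{n,n}·(−(2+√3))^n → −4b` as `n → ∞`;
equivalently `a_{n,n} ∼ (−(2−√3))^n·(−4 a_{1,1})` and
`b_{n,n} ∼ (−(2−√3))^n·(−4 b_{1,1})`. -/
theorem two_sided_coefficients_asymptotics
    (ΔL ΔR : ℝ) (hL : 0 < ΔL) (hR : 0 < ΔR)
    (a b : ℝ)
    (ha : a = -(1/2) * ΔL / (ΔR + ΔL))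
    (hb : b = -(1/2) * ΔR / (ΔR + ΔL))
    (D A B : ℕ → ℝ)
    (hD : ∀ n : ℕ, 1 ≤ n →
      D n = uSeq (n : ℤ) * uSeq (n : ℤ) + uSeq (n : ℤ) * uSeq ((n : ℤ) - 1) * a
              + uSeq (n : ℤ) * uSeq ((n : ℤ) - 1) * b)
    (hA : ∀ n : ℕ, 1 ≤ n →
      A n = (-1 : ℝ) ^ (n - 1) * uSeq 1 * a * uSeq (n : ℤ) / D n)
    (hB : ∀ n : ℕ, 1 ≤ n →
      B n = (-1 : ℝ) ^ (n - 1) * uSeq 1 * b * uSeq (n : ℤ) / D n) :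
    (∀ n : ℕ, 1 ≤ n → D n ≠ 0) ∧
    Filter.Tendsto (fun n : ℕ => A n * (-(2 + Real.sqrt 3)) ^ n)
      Filter.atTop (nhds (-4 * a)) ∧
    Filter.Tendsto (fun n : ℕ => B n * (-(2 + Real.sqrt 3)) ^ n)
      Filter.atTop (nhds (-4 * b)) := by
  have hab : a + b = -(1 / 2) := by
    have : ΔR + ΔL ≠ 0 := by positivity
    rw [ha, hb]; field_simp; ring
  have hD' : ∀ m : ℕ, D (m + 1) = uSeq (m + 1 : ℕ) * (uSeq (m + 1 : ℕ) - uSeq m / 2) := by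
    intro m
    rw [hD (m + 1) m.succ_pos]
    push_cast
    rw [add_sub_cancel_right]
    linear_combination uSeq (m + 1) * uSeq m * hab
  refine ⟨fun n hn => ?_, tendsto_coeff_mul_neg_pow hD' hA, tendsto_coeff_mul_neg_pow hD' hB⟩
  obtain ⟨m, rfl⟩ := Nat.exists_eq_add_of_le' hn
  rw [hD']
  exact (mul_pos (uSeq.natCast_pos m.succ_ne_zero) (uSeq.natCast_succ_sub_half_pos m)).ne'
end

section
/- For k ∈ ℤ define u_k = (2+√3)^k − (2−√3)^k. Let Δ^L > 0, Δ^R > 0 and set a = −(1/2)·Δ^L/(Δ^R+Δ^L) and b = −(1/2)·Δ^R/(Δ^R+Δ^L). For n ≥ 1 let D_n = u_n·u_n + u_n·u_{n-1}·(a+b), and for an integer k with −n ≤ k ≤ n define ω_{k,n} by: ω_{k,n} = 3·(−1)^k·(a/Δ^R)·u_n·(u_{n-k+1} − u_{n-k-1})/D_n for 1 ≤ k ≤ n−1, and ω_{k,n} = 3·(−1)^{k+1}·(b/Δ^L)·u_n·(u_{n+k+1} − u_{n+k-1})/D_n for −(n−1) ≤ k ≤ −1. Then for every fixed integer k ≥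 1, ω_{k,n} → (−1)^k·12·(a/Δ^R)·(2−√3)^k as n → ∞, and for every fixed integer k ≤ −1, ω_{k,n} → (−1)^{k+1}·12·(b/Δ^L)·(2−√3)^{-k} as n → ∞. -/
lemma key_ratio (j : ℤ) (n : ℕ) (hn : 1 ≤ n) :
    uSeq (n : ℤ) * (uSeq ((n : ℤ) - j + 1) - uSeq ((n : ℤ) - j - 1)) /
      (uSeq (n : ℤ) * uSeq (n : ℤ) + uSeq (n : ℤ) * uSeq ((n : ℤ) - 1) * (-(1/2))) =
    2 * Real.sqrt 3 * ((2 - Real.sqrt 3) ^ j + (2 + Real.sqrt 3) ^ j * ((2 - Real.sqrt 3) ^ 2) ^ n) /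
      (Real.sqrt 3 / 2 * (1 + ((2 - Real.sqrt 3) ^ 2) ^ n)) := by
  have hs0 : (0:ℝ) < Real.sqrt 3 := Real.sqrt_pos.mpr (by norm_num)
  have hs3 : Real.sqrt 3 ^ 2 = 3 := Real.sq_sqrt (by norm_num)
  set s : ℝ := Real.sqrt 3 with hsdef
  have hs2 : s < 2 := by nlinarith
  have hs1 : 1 < s := by nlinarith
  set α : ℝ := 2 + s with hαdef
  set β : ℝ := 2 - s with hβdef
  have hα : 0 < α := by positivity
  have hβ : 0 < β := by simp only [hβdef]; linarith
  have hαβ : α * β = 1 := by simp only [hαdef, hβdef]; nlinarith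
  have hinvα : α⁻¹ = β := by
    field_simp
    linarith [hαβ]
  have hinvβ : β⁻¹ = α := by
    field_simp
    nlinarith [hαβ]
  set x : ℝ := α ^ (n : ℤ) with hxdef
  set y : ℝ := β ^ (n : ℤ) with hydef
  have hxpos : 0 < x := zpow_pos hα _
  have hypos : 0 < y := zpow_pos hβ _
  have hxy : x * y = 1 := by
    rw [hxdef, hydef, ← mul_zpow, hαβ, one_zpow]
  have hyx : y < x := by
    have h1 : β ^ n < α ^ n := by
      apply pow_lt_pow_left₀ _ hβ.le (by omega)
      simp only [hαdef, hβdef]; linarith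
    rw [hxdef, hydef, zpow_natCast, zpow_natCast]
    exact h1
  have hαj : α ^ (-j) = β ^ j := by rw [zpow_neg, ← inv_zpow, hinvα]
  have hβj : β ^ (-j) = α ^ j := by rw [zpow_neg, ← inv_zpow, hinvβ]
  have e1 : uSeq (n : ℤ) = x - y := rfl
  have e2 : uSeq ((n : ℤ) - 1) = x * β - y * α := by
    show α ^ ((n:ℤ) - 1) - β ^ ((n:ℤ) - 1) = _
    rw [zpow_sub₀ hα.ne', zpow_sub₀ hβ.ne', zpow_one, zpow_one,
      div_eq_mul_inv, div_eq_mul_inv, hinvα, hinvβ]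
  have e3 : uSeq ((n : ℤ) - j + 1) = x * β ^ j * α - y * α ^ j * β := by
    show α ^ ((n:ℤ) - j + 1) - β ^ ((n:ℤ) - j + 1) = _
    rw [show (n:ℤ) - j + 1 = (n:ℤ) + (-j) + 1 by ring, zpow_add₀ hα.ne',
      zpow_add₀ hα.ne', zpow_add₀ hβ.ne', zpow_add₀ hβ.ne', zpow_one, zpow_one,
      hαj, hβj]
  have e4 : uSeq ((n : ℤ) - j - 1) = x * β ^ j * β - y * α ^ j * α := by
    show α ^ ((n:ℤ) - j - 1) - β ^ ((n:ℤ) - j - 1) = _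
    rw [show (n:ℤ) - j - 1 = (n:ℤ) + (-j) + (-1) by ring, zpow_add₀ hα.ne',
      zpow_add₀ hα.ne', zpow_add₀ hβ.ne', zpow_add₀ hβ.ne',
      hαj, hβj, zpow_neg, zpow_neg, zpow_one, zpow_one, hinvα, hinvβ]
  have hy2 : ((β ^ 2) ^ n : ℝ) = y ^ 2 := by
    rw [hydef, zpow_natCast, ← pow_mul, ← pow_mul, Nat.mul_comm]
  rw [e1, e2, e3, e4, hy2]
  set A : ℝ := α ^ j with hA
  set B : ℝ := β ^ j with hB
  have hden1 : (x - y) * (x - y) + (x - y) * (x * β - y * α) * (-(1/2)) =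
      s / 2 * ((x - y) * (x + y)) := by
    simp only [hαdef, hβdef]; ring
  rw [hden1]
  have hd1 : s / 2 * ((x - y) * (x + y)) ≠ 0 := by
    have : 0 < (x - y) * (x + y) := mul_pos (by linarith) (by linarith)
    positivity
  have hd2 : s / 2 * (1 + y ^ 2) ≠ 0 := by positivity
  rw [div_eq_div_iff hd1 hd2]
  have hnum : (x - y) * ((x * B * α - y * A * β) - (x * B * β - y * A * α)) =
      (x - y) * (2 * s * (x * B + y * A)) := by
    simp only [hαdef, hβdef]; ring
  rw [hnum]
  linear_combination (s ^ 2 * (x - y) * y * (B - A)) * hxy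

/-- **Asymptotic behavior of the explicit weights `ω_{k,n}` of the
inhomogeneous coefficient `c_{n,n}` when the same (large) number `n` of cells
is used on both sides of the interface.** For each fixed `k ≥ 1`,
`ω_{k,n} → (−1)^k·12·(a/ΔR)·(2−√3)^k`, and for each fixed `k ≤ −1`,
`ω_{k,n} → (−1)^{k+1}·12·(b/ΔL)·(2−√3)^{−k}`, as `n → ∞`. -/
theorem weights_asymptotics
    (ΔL ΔR : ℝ) (hL : 0 < ΔL) (hR : 0 < ΔR)
    (a b : ℝ)
    (ha : a = -(1/2) * ΔL / (ΔR + ΔL))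
    (hb : b = -(1/2) * ΔR / (ΔR + ΔL))
    (D : ℕ → ℝ)
    (hD : ∀ n : ℕ, 1 ≤ n →
      D n = uSeq (n : ℤ) * uSeq (n : ℤ) + uSeq (n : ℤ) * uSeq ((n : ℤ) - 1) * (a + b))
    (ω : ℤ → ℕ → ℝ)
    (hωpos : ∀ (k : ℤ) (n : ℕ), 1 ≤ k → k ≤ (n : ℤ) - 1 →
      ω k n = 3 * (-1 : ℝ) ^ k * (a / ΔR) * uSeq (n : ℤ) *
                (uSeq ((n : ℤ) - k + 1) - uSeq ((n : ℤ) - k - 1)) / D n)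
    (hωneg : ∀ (k : ℤ) (n : ℕ), -((n : ℤ) - 1) ≤ k → k ≤ -1 →
      ω k n = 3 * (-1 : ℝ) ^ (k + 1) * (b / ΔL) * uSeq (n : ℤ) *
                (uSeq ((n : ℤ) + k + 1) - uSeq ((n : ℤ) + k - 1)) / D n) :
    (∀ k : ℤ, 1 ≤ k →
      Filter.Tendsto (fun n : ℕ => ω k n) Filter.atTop
        (nhds ((-1 : ℝ) ^ k * 12 * (a / ΔR) * (2 - Real.sqrt 3) ^ k))) ∧
    (∀ k : ℤ, k ≤ -1 →
      Filter.Tendsto (fun n : ℕ => ω k n) Filter.atTop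
        (nhds ((-1 : ℝ) ^ (k + 1) * 12 * (b / ΔL) * (2 - Real.sqrt 3) ^ (-k)))) := by
  have hs0 : (0:ℝ) < Real.sqrt 3 := Real.sqrt_pos.mpr (by norm_num)
  have hs3 : Real.sqrt 3 ^ 2 = 3 := Real.sq_sqrt (by norm_num)
  have hs2 : Real.sqrt 3 < 2 := by nlinarith
  have hs1 : 1 < Real.sqrt 3 := by nlinarith
  have hΔ : ΔR + ΔL ≠ 0 := by positivity
  have hab : a + b = -(1/2) := by
    rw [ha, hb]
    field_simp
    ring
  have hβ2lt : (2 - Real.sqrt 3) ^ 2 < 1 := by nlinarith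
  have hβ2nn : (0:ℝ) ≤ (2 - Real.sqrt 3) ^ 2 := sq_nonneg _
  have ht : Filter.Tendsto (fun n : ℕ => ((2 - Real.sqrt 3) ^ 2) ^ n)
      Filter.atTop (nhds 0) :=
    tendsto_pow_atTop_nhds_zero_of_lt_one hβ2nn hβ2lt
  have gen : ∀ j : ℤ, Filter.Tendsto
      (fun n : ℕ => 2 * Real.sqrt 3 * ((2 - Real.sqrt 3) ^ j +
          (2 + Real.sqrt 3) ^ j * ((2 - Real.sqrt 3) ^ 2) ^ n) /
        (Real.sqrt 3 / 2 * (1 + ((2 - Real.sqrt 3) ^ 2) ^ n)))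
      Filter.atTop (nhds (4 * (2 - Real.sqrt 3) ^ j)) := by
    intro j
    have hnum : Filter.Tendsto
        (fun n : ℕ => 2 * Real.sqrt 3 * ((2 - Real.sqrt 3) ^ j +
          (2 + Real.sqrt 3) ^ j * ((2 - Real.sqrt 3) ^ 2) ^ n))
        Filter.atTop (nhds (2 * Real.sqrt 3 * ((2 - Real.sqrt 3) ^ j +
          (2 + Real.sqrt 3) ^ j * 0))) :=
      ((ht.const_mul _).const_add _).const_mul _
    have hden : Filter.Tendsto
        (fun n : ℕ => Real.sqrt 3 / 2 * (1 + ((2 - Real.sqrt 3) ^ 2) ^ n))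
        Filter.atTop (nhds (Real.sqrt 3 / 2 * (1 + 0))) :=
      (ht.const_add _).const_mul _
    have hne : Real.sqrt 3 / 2 * (1 + 0) ≠ 0 := by positivity
    have := hnum.div hden hne
    have hval : 2 * Real.sqrt 3 * ((2 - Real.sqrt 3) ^ j + (2 + Real.sqrt 3) ^ j * 0) /
        (Real.sqrt 3 / 2 * (1 + 0)) = 4 * (2 - Real.sqrt 3) ^ j := by
      field_simp
      ring
    rwa [hval] at this
  constructor
  · intro k hk
    have hlim := (gen k).const_mul (3 * (-1:ℝ) ^ k * (a / ΔR))
    have hval : (3 * (-1:ℝ) ^ k * (a / ΔR)) * (4 * (2 - Real.sqrt 3) ^ k) =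
        (-1:ℝ) ^ k * 12 * (a / ΔR) * (2 - Real.sqrt 3) ^ k := by ring
    rw [hval] at hlim
    refine Filter.Tendsto.congr' ?_ hlim
    have hktn : (k.toNat : ℤ) = k := Int.toNat_of_nonneg (by linarith)
    filter_upwards [Filter.eventually_ge_atTop (k.toNat + 1)] with n hn
    have hn1 : 1 ≤ n := by omega
    have hkn : k ≤ (n : ℤ) - 1 := by
      have : (k.toNat : ℤ) + 1 ≤ (n : ℤ) := by exact_mod_cast hn
      omega
    rw [hωpos k n hk hkn, hD n hn1, hab]
    linear_combination (-(3 * (-1:ℝ) ^ k * (a / ΔR))) * key_ratio k n hn1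
  · intro k hk
    have hlim := (gen (-k)).const_mul (3 * (-1:ℝ) ^ (k + 1) * (b / ΔL))
    have hval : (3 * (-1:ℝ) ^ (k + 1) * (b / ΔL)) * (4 * (2 - Real.sqrt 3) ^ (-k)) =
        (-1:ℝ) ^ (k + 1) * 12 * (b / ΔL) * (2 - Real.sqrt 3) ^ (-k) := by ring
    rw [hval] at hlim
    refine Filter.Tendsto.congr' ?_ hlim
    have hktn : ((-k).toNat : ℤ) = -k := Int.toNat_of_nonneg (by linarith)
    filter_upwards [Filter.eventually_ge_atTop ((-k).toNat + 1)] with n hn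
    have hn1 : 1 ≤ n := by omega
    have hkn : -((n : ℤ) - 1) ≤ k := by
      have : ((-k).toNat : ℤ) + 1 ≤ (n : ℤ) := by exact_mod_cast hn
      omega
    rw [hωneg k n hkn hk, hD n hn1, hab,
      show (n:ℤ) + k + 1 = (n:ℤ) - (-k) + 1 by ring,
      show (n:ℤ) + k - 1 = (n:ℤ) - (-k) - 1 by ring]
    linear_combination (-(3 * (-1:ℝ) ^ (k + 1) * (b / ΔL))) * key_ratio (-k) n hn1
end
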